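/- arXiv:1904.00072 — 2 statements merged into one kernel-verified Lean document; each statement's English description precedes it below -/
import Mathlib

section
/- Let n ≥ 2 and let A_0, A_1, A_{11} ∈ ℝ. If Q(x) = A_0 + A_1 s_1(x) + A_{11} s_{11}(x) ≥ 0 for all x ∈ [−1,1]^n, then P_Q(X) + A_0/(n − 1) ≥ 0 for all X ∈ [−√n, √n], where P_Q(X) = (A_0 − n A_{11}) + √n A_1 X + n A_{11} X². -/
open scoped BigOperators

/-- `s1 x = ∑ i, x_i` -/
noncomputable def s1 (n : ℕ) (x : Fin n → ℝ) : ℝ := ∑ i, x i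

/-- `s11 x = ∑_{i ≠ j} x_i x_j` (sum over ordered pairs). -/
noncomputable def s11 (n : ℕ) (x : Fin n → ℝ) : ℝ :=
  ∑ i, ∑ j, if i = j then 0 else x i * x j

lemma s11_eq (n : ℕ) (x : Fin n → ℝ) :
    s11 n x = (s1 n x)^2 - ∑ i, (x i)^2 := by
  unfold s11 s1
  have h : ∀ i : Fin n, (∑ j, if i = j then (0:ℝ) else x i * x j)
      = (∑ j, x i * x j) - x i * x i := by
    intro i
    have : ∀ j : Fin n, (if i = j then (0:ℝ) else x i * x j)
        = x i * x j - (if i = j then x i * x j else 0) := by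
      intro j; split <;> simp
    rw [Finset.sum_congr rfl fun j _ => this j, Finset.sum_sub_distrib,
      Finset.sum_ite_eq]
    simp
  rw [Finset.sum_congr rfl fun i _ => h i, Finset.sum_sub_distrib,
    ← Finset.sum_mul_sum]
  rw [sq]
  congr 1
  exact Finset.sum_congr rfl fun i _ => by ring

lemma key (n : ℕ) (hn : 2 ≤ n) (A0 A1 A11 : ℝ)
    (hQ : ∀ x : Fin n → ℝ, (∀ i, x i ∈ Set.Icc (-1 : ℝ) 1) →
      0 ≤ A0 + A1 * s1 n x + A11 * s11 n x)
    (s : ℝ) (hsl : -(n:ℝ) ≤ s) (hsu : s ≤ n) :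
    ∃ t : ℝ, t^2 ≤ 1 ∧ 0 ≤ A0 + A1 * s + A11 * (s^2 - ((n:ℝ) - 1) - t^2) := by
  obtain ⟨p, rfl⟩ : ∃ p, n = p + 1 := ⟨n - 1, by omega⟩
  set M : ℕ := ⌊(s + (p+1)) / 2⌋₊ with hM
  set m : ℕ := min M p with hm
  set t : ℝ := s - (2 * (m:ℝ) - p) with ht
  have hnn : (0:ℝ) ≤ (s + (p+1)) / 2 := by
    push_cast at hsl ⊢; linarith
  have hM1 : (M:ℝ) ≤ (s + (p+1)) / 2 := Nat.floor_le hnn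
  have hM2 : (s + (p+1)) / 2 < M + 1 := Nat.lt_floor_add_one _
  have hmp : m ≤ p := min_le_right _ _
  have ht1 : -1 ≤ t := by
    rcases le_or_gt M p with h | h
    · have : m = M := by omega
      rw [ht, this]; push_cast; push_cast at hM1; linarith
    · have hmp' : m = p := by omega
      have : ((p:ℝ) + 1) ≤ (s + (p+1)) / 2 := by
        have := (Nat.le_floor_iff hnn).mp (show p + 1 ≤ M by omega)
        push_cast at this ⊢; linarith
      rw [ht, hmp']; push_cast; linarith
  have ht2 : t ≤ 1 := by
    rcases le_or_gt M p with h | h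
    · have : m = M := by omega
      rw [ht, this]; push_cast; push_cast at hM2; linarith
    · have hmp' : m = p := by omega
      rw [ht, hmp']; push_cast; push_cast at hsu; linarith
  set x : Fin (p+1) → ℝ := fun i => if (i:ℕ) < m then 1 else if (i:ℕ) < p then -1 else t with hx
  have hmem : ∀ i, x i ∈ Set.Icc (-1:ℝ) 1 := by
    intro i; rw [hx]; dsimp only; split_ifs <;> constructor <;> norm_num <;> linarith
  have hsum1 : ∑ i ∈ Finset.range p, (if i < m then (1:ℝ) else -1) = 2 * m - p := by
    rw [Finset.range_eq_Ico, ← Finset.sum_Ico_consecutive _ (Nat.zero_le m) hmp]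
    rw [Finset.sum_congr rfl (fun i hi => if_pos (Finset.mem_Ico.mp hi).2),
      Finset.sum_congr (rfl : Finset.Ico m p = Finset.Ico m p)
        (fun i hi => if_neg (by have := (Finset.mem_Ico.mp hi).1; omega))]
    simp [Nat.cast_sub hmp]
    ring
  have hs1x : s1 (p+1) x = s := by
    rw [s1, hx,
      Fin.sum_univ_eq_sum_range (fun j => if j < m then (1:ℝ) else if j < p then -1 else t),
      Finset.sum_range_succ, if_neg (show ¬ p < m by omega), if_neg (lt_irrefl p)]
    have h1 : ∀ i ∈ Finset.range p,
        (if i < m then (1:ℝ) else if i < p then -1 else t) = (if i < m then (1:ℝ) else -1) := by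
      intro i hi
      have hip : i < p := Finset.mem_range.mp hi
      split_ifs <;> first | rfl | omega
    rw [Finset.sum_congr rfl h1, hsum1, ht]; ring
  have hsq : ∑ i, (x i)^2 = p + t^2 := by
    simp only [hx]
    rw [Fin.sum_univ_eq_sum_range
        (fun j => (if j < m then (1:ℝ) else if j < p then -1 else t)^2),
      Finset.sum_range_succ, if_neg (show ¬ p < m by omega), if_neg (lt_irrefl p)]
    have h1 : ∀ i ∈ Finset.range p,
        (if i < m then (1:ℝ) else if i < p then -1 else t)^2 = 1 := by
      intro i hi
      have hip : i < p := Finset.mem_range.mp hi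
      split_ifs <;> first | norm_num | omega
    rw [Finset.sum_congr rfl h1, Finset.sum_const, Finset.card_range]
    simp
  have hs11x : s11 (p+1) x = s^2 - ((p:ℝ)+1-1) - t^2 := by
    rw [s11_eq, hs1x, hsq]; push_cast; ring
  refine ⟨t, by nlinarith, ?_⟩
  have := hQ x hmem
  rw [hs1x, hs11x] at this
  push_cast at this ⊢
  linarith

theorem stmt_6 (n : ℕ) (hn : 2 ≤ n) (A0 A1 A11 : ℝ)
    (hQ : ∀ x : Fin n → ℝ, (∀ i, x i ∈ Set.Icc (-1 : ℝ) 1) →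
      0 ≤ A0 + A1 * s1 n x + A11 * s11 n x) :
    ∀ X : ℝ, X ∈ Set.Icc (-Real.sqrt n) (Real.sqrt n) →
      0 ≤ ((A0 - n * A11) + Real.sqrt n * A1 * X + n * A11 * X ^ 2)
        + A0 / ((n : ℝ) - 1) := by
  intro X hX
  obtain ⟨hX1, hX2⟩ := hX
  have hn1 : (1:ℝ) ≤ n := by exact_mod_cast Nat.one_le_of_lt hn
  have hc : (0:ℝ) < (n:ℝ) - 1 := by
    have : (2:ℝ) ≤ n := by exact_mod_cast hn
    linarith
  have hA0 : 0 ≤ A0 := by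
    have := hQ (fun _ => 0) (fun i => by norm_num)
    simpa [s1, s11] using this
  set s : ℝ := Real.sqrt n * X with hs
  have hsqn : Real.sqrt n * Real.sqrt n = n := Real.mul_self_sqrt (by positivity)
  have hsl : -(n:ℝ) ≤ s := by nlinarith [Real.sqrt_nonneg (n:ℝ)]
  have hsu : s ≤ n := by nlinarith [Real.sqrt_nonneg (n:ℝ)]
  have hs2 : s^2 = n * X^2 := by rw [hs]; ring_nf; nlinarith [hsqn]
  obtain ⟨t, ht, hK⟩ := key n hn A0 A1 A11 hQ s hsl hsu
  obtain ⟨t0, ht0, h0⟩ := key n hn A0 A1 A11 hQ 0 (by linarith) (by linarith)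
  rw [hs] at hK hs2
  have hmain : 0 ≤ ((n:ℝ) - 1) * ((A0 - n * A11) + Real.sqrt n * A1 * X + n * A11 * X ^ 2) + A0 := by
    have hP : A11 * (t^2 - 1) ≤ (A0 - n * A11) + Real.sqrt n * A1 * X + n * A11 * X ^ 2 := by
      nlinarith [hK, hs2]

    rcases le_or_gt 0 A11 with h | h
    · have h0' : A11 * ((n:ℝ) - 1) ≤ A0 := by nlinarith [sq_nonneg t0]
      nlinarith [mul_nonneg h (sq_nonneg t)]
    · nlinarith [mul_nonneg (le_of_lt (neg_pos.mpr h)) (sub_nonneg.mpr ht)]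
  have heq : ((A0 - n * A11) + Real.sqrt n * A1 * X + n * A11 * X ^ 2) + A0 / ((n : ℝ) - 1)
      = (((n:ℝ) - 1) * ((A0 - n * A11) + Real.sqrt n * A1 * X + n * A11 * X ^ 2) + A0) / ((n:ℝ) - 1) := by
    field_simp
  rw [heq]
  exact div_nonneg hmain hc.le
end

section
/- Let n ≥ 2 and d ≥ 1 be integers and let A_0, A_α, A_{αα} (1 ≤ α ≤ d) be real numbers. If P_Q(X,Y) = A_0 + √n Σ_{α=1}^d A_α X_α + (n − 1) Σ_{α=1}^d A_{αα} X_α² − n Σ_{α=1}^d A_{αα} Y_α² ≥ 0 for all X, Y ∈ ℝ^d with ‖Y‖² + ‖X‖²/n ≤ 1, then Q(x) = A_0 + Σ_{α=1}^d A_α s_α(x) + Σ_{α=1}^d A_{αα} s_{αα}(x) ≥ 0 for all x ∈ K_n^d. -/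
open scoped BigOperators

/-- `sLin n d α x = ∑ i, ξ_{i,α}` -/
noncomputable def sLin (n d : ℕ) (α : Fin d) (x : Fin n → Fin d → ℝ) : ℝ :=
  ∑ i, x i α

/-- `sQuad n d α x = ∑_{i ≠ j} ξ_{i,α} ξ_{j,α}` (sum over ordered pairs). -/
noncomputable def sQuad (n d : ℕ) (α : Fin d) (x : Fin n → Fin d → ℝ) : ℝ :=
  ∑ i, ∑ j, if i = j then 0 else x i α * x j α

/-- `Qpoly n d A0 A B x = A0 + ∑ α A_α s_α(x) + ∑ α A_{αα} s_{αα}(x)` -/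
noncomputable def Qpoly (n d : ℕ) (A0 : ℝ) (A B : Fin d → ℝ)
    (x : Fin n → Fin d → ℝ) : ℝ :=
  A0 + ∑ α, A α * sLin n d α x + ∑ α, B α * sQuad n d α x

/-- `PQ n d A0 A B X Y = A0 + √n ∑ A_α X_α + (n-1) ∑ A_{αα} X_α² - n ∑ A_{αα} Y_α²` -/
noncomputable def PQ (n d : ℕ) (A0 : ℝ) (A B : Fin d → ℝ) (X Y : Fin d → ℝ) : ℝ :=
  A0 + Real.sqrt n * ∑ α, A α * X α
    + ((n : ℝ) - 1) * ∑ α, B α * (X α) ^ 2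
    - n * ∑ α, B α * (Y α) ^ 2

/-!
Put `s_α = ∑ᵢ ξ_{i,α}` and `t_α = ∑ᵢ ξ_{i,α}²`. Since `s_{αα} = s_α² - t_α`, the polynomial
`Q` depends on `x` only through `s` and `t`, and it equals `P_Q(X, Y)` at `X_α = s_α / √n` and
`Y_α = √((t_α - s_α² / n) / n)`, the root being real by Cauchy–Schwarz. This point satisfies
`‖Y‖² + ‖X‖² / n = (∑ᵢ ‖x_i‖²) / n ≤ 1`, so the hypothesis on `P_Q` gives `Q(x) ≥ 0`.
-/

lemma sum_sum_ite_eq_sq_sub {ι R : Type*} [Fintype ι] [DecidableEq ι] [CommRing R]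
    (f : ι → R) :
    ∑ i, ∑ j, (if i = j then 0 else f i * f j) = (∑ i, f i) ^ 2 - ∑ i, f i ^ 2 := by
  have h : ∀ i j, (if i = j then 0 else f i * f j)
      = f i * f j - if i = j then f i * f j else 0 := by
    intro i j
    split_ifs <;> simp
  simp only [h, Finset.sum_sub_distrib, Finset.sum_ite_eq, Finset.mem_univ, if_true,
    ← Finset.mul_sum, ← Finset.sum_mul, sq]

lemma sQuad_eq (n d : ℕ) (α : Fin d) (x : Fin n → Fin d → ℝ) :
    sQuad n d α x = sLin n d α x ^ 2 - ∑ i, x i α ^ 2 :=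
  sum_sum_ite_eq_sq_sub fun i => x i α

lemma sq_sLin_le (n d : ℕ) (α : Fin d) (x : Fin n → Fin d → ℝ) :
    sLin n d α x ^ 2 ≤ n * ∑ i, x i α ^ 2 := by
  simpa [sLin] using sq_sum_le_card_mul_sum_sq (s := Finset.univ) (f := fun i => x i α)

section Witness

variable {n d : ℕ} (x : Fin n → Fin d → ℝ)

noncomputable def scaledSumPoint : Fin d → ℝ :=
  fun α => sLin n d α x / Real.sqrt n

noncomputable def spreadPoint : Fin d → ℝ :=
  fun α => Real.sqrt ((∑ i, x i α ^ 2 - sLin n d α x ^ 2 / n) / n)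

variable {x}

lemma sq_scaledSumPoint (α : Fin d) : scaledSumPoint x α ^ 2 = sLin n d α x ^ 2 / n := by
  rw [scaledSumPoint, div_pow, Real.sq_sqrt (Nat.cast_nonneg n)]

lemma sq_spreadPoint (hn : 0 < n) (α : Fin d) :
    spreadPoint x α ^ 2 = (∑ i, x i α ^ 2 - sLin n d α x ^ 2 / n) / n := by
  have hn' : (0 : ℝ) < n := Nat.cast_pos.mpr hn
  refine Real.sq_sqrt (div_nonneg ?_ hn'.le)
  rw [sub_nonneg, div_le_iff₀ hn', mul_comm]
  exact sq_sLin_le n d α x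

lemma PQ_scaledSumPoint_spreadPoint (hn : 0 < n) (A0 : ℝ) (A B : Fin d → ℝ) :
    PQ n d A0 A B (scaledSumPoint x) (spreadPoint x) = Qpoly n d A0 A B x := by
  have hn' : (n : ℝ) ≠ 0 := Nat.cast_ne_zero.mpr hn.ne'
  have hsqrt : Real.sqrt n ≠ 0 := Real.sqrt_ne_zero'.mpr (Nat.cast_pos.mpr hn)
  have hlin : Real.sqrt n * ∑ α, A α * scaledSumPoint x α = ∑ α, A α * sLin n d α x := by
    rw [Finset.mul_sum]
    refine Finset.sum_congr rfl fun α _ => ?_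
    rw [scaledSumPoint]
    field_simp
  have hquad : ((n : ℝ) - 1) * ∑ α, B α * scaledSumPoint x α ^ 2
      - n * ∑ α, B α * spreadPoint x α ^ 2 = ∑ α, B α * sQuad n d α x := by
    rw [Finset.mul_sum, Finset.mul_sum, ← Finset.sum_sub_distrib]
    refine Finset.sum_congr rfl fun α _ => ?_
    rw [sq_scaledSumPoint, sq_spreadPoint hn, sQuad_eq]
    field_simp
    ring
  rw [PQ, Qpoly, hlin, ← hquad]
  ring

lemma sum_sq_spreadPoint_add_sum_sq_scaledSumPoint_div_le_one (hn : 0 < n)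
    (hx : ∀ i, ∑ α, x i α ^ 2 ≤ 1) :
    ∑ α, spreadPoint x α ^ 2 + (∑ α, scaledSumPoint x α ^ 2) / n ≤ 1 := by
  have hn' : (0 : ℝ) < n := Nat.cast_pos.mpr hn
  have hsum : ∑ α, spreadPoint x α ^ 2 + (∑ α, scaledSumPoint x α ^ 2) / n
      = (∑ i, ∑ α, x i α ^ 2) / n := by
    rw [Finset.sum_comm, Finset.sum_div, Finset.sum_div, ← Finset.sum_add_distrib]
    refine Finset.sum_congr rfl fun α _ => ?_
    rw [sq_spreadPoint hn, sq_scaledSumPoint]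
    field_simp
    ring
  rw [hsum, div_le_one hn']
  simpa using Finset.sum_le_sum fun i (_ : i ∈ Finset.univ) => hx i

end Witness

theorem stmt_12_general (n d : ℕ) (hn : 2 ≤ n)
    (A0 : ℝ) (A B : Fin d → ℝ)
    (hP : ∀ X Y : Fin d → ℝ,
      (∑ α, (Y α) ^ 2) + (∑ α, (X α) ^ 2) / n ≤ 1 →
      0 ≤ PQ n d A0 A B X Y) :
    ∀ x : Fin n → Fin d → ℝ, (∀ i, ∑ α, (x i α) ^ 2 ≤ 1) →
      0 ≤ Qpoly n d A0 A B x := by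
  intro x hx
  have hn0 : 0 < n := by omega
  rw [← PQ_scaledSumPoint_spreadPoint hn0]
  exact hP _ _
    (sum_sq_spreadPoint_add_sum_sq_scaledSumPoint_div_le_one hn0 hx)

theorem stmt_12 (n d : ℕ) (hn : 2 ≤ n) (hd : 1 ≤ d)
    (A0 : ℝ) (A B : Fin d → ℝ)
    (hP : ∀ X Y : Fin d → ℝ,
      (∑ α, (Y α) ^ 2) + (∑ α, (X α) ^ 2) / n ≤ 1 →
      0 ≤ PQ n d A0 A B X Y) :
    ∀ x : Fin n → Fin d → ℝ, (∀ i, ∑ α, (x i α) ^ 2 ≤ 1) →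
      0 ≤ Qpoly n d A0 A B x :=
  stmt_12_general n d hn A0 A B hP
end
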